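/- arXiv:1112.4315 — 3 statements merged into one kernel-verified Lean document; each statement's English description precedes it below -/
import Mathlib

section
/- Let Q be an Ω-algebra and let S = Q with the Q-topology u = ⟨{id_Q}⟩, the subalgebra of Q^Q generated by the identity map. Then for any Q-topological space (X,τ) and any function p : X → Q, p ∈ τ if and only if p : (X,τ) → (S,u) is Q-continuous. -/
universe u v w x

/-- Closure of a set of `Q`-valued functions on `X` under the pointwise
Ω-algebra operations `ops`. -/
def Closed {Q : Type u} {I : Type v} {n : I → Type w} (ops : ∀ i, (n i → Q) → Q)
    {X : Type x} (B : Set (X → Q)) : Prop :=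
  ∀ i (p : n i → X → Q), (∀ j, p j ∈ B) → (fun x => ops i (fun j => p j x)) ∈ B

/-- A `Q`-topology on `X`: a nonempty subset of `Q^X` closed under the
pointwise operations, i.e. a subalgebra of the power algebra. -/
def IsQTop {Q : Type u} {I : Type v} {n : I → Type w} (ops : ∀ i, (n i → Q) → Q)
    {X : Type x} (τ : Set (X → Q)) : Prop :=
  τ.Nonempty ∧ Closed ops τ

/-- The subalgebra of `Q^X` generated by `S`: the intersection of all
subalgebras containing `S`. -/
def gen {Q : Type u} {I : Type v} {n : I → Type w} (ops : ∀ i, (n i → Q) → Q)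
    {X : Type x} (S : Set (X → Q)) : Set (X → Q) :=
  ⋂₀ {B | S ⊆ B ∧ IsQTop ops B}

/-- `Q`-continuity of `f : (X,τ) → (Y,η)` : preimages `α ∘ f` of members of `η`
belong to `τ`. -/
def QCont {Q : Type u} {I : Type v} {n : I → Type w} (ops : ∀ i, (n i → Q) → Q)
    {X : Type x} {Y : Type x} (τ : Set (X → Q)) (η : Set (Y → Q)) (f : X → Y) : Prop :=
  ∀ α ∈ η, (fun x => α (f x)) ∈ τ

/-- The `Q`-Sierpinski topology on `S = Q`: the subalgebra of `Q^Q` generated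
by the identity map. -/
def sierp {Q : Type u} {I : Type v} {n : I → Type w} (ops : ∀ i, (n i → Q) → Q) :
    Set (Q → Q) :=
  gen ops ({id} : Set (Q → Q))

/- The functions `α : Q → Q` with `α ∘ p ∈ τ` form a subalgebra of `Q^Q`; it contains `id`
exactly when `p ∈ τ`, and then it contains the whole subalgebra generated by `id`. -/

section Generated

variable {Q : Type u} {I : Type v} {n : I → Type w} (ops : ∀ i, (n i → Q) → Q)

theorem subset_gen {X : Type x} (S : Set (X → Q)) : S ⊆ gen ops S :=
  fun _ hα _ hB => hB.1 hα

theorem gen_subset {X : Type x} {S B : Set (X → Q)} (hSB : S ⊆ B) (hB : IsQTop ops B) :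
    gen ops S ⊆ B :=
  Set.sInter_subset_of_mem ⟨hSB, hB⟩

theorem id_mem_sierp : (id : Q → Q) ∈ sierp ops :=
  subset_gen ops _ rfl

theorem Closed.comap {X Y : Type x} {τ : Set (X → Q)} (hτ : Closed ops τ) (f : X → Y) :
    Closed ops {α : Y → Q | (fun x => α (f x)) ∈ τ} :=
  fun i q hq => hτ i (fun j x => q j (f x)) hq

theorem qCont_sierp_of_mem {X : Type u} {τ : Set (X → Q)} (hτ : Closed ops τ) {p : X → Q}
    (hp : p ∈ τ) : QCont ops τ (sierp ops) p :=
  fun _ hα => gen_subset ops (by rintro _ rfl; exact hp) ⟨⟨id, hp⟩, hτ.comap ops p⟩ hα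

end Generated

theorem stmt_6 {Q : Type u} {I : Type v} {n : I → Type w} (ops : ∀ i, (n i → Q) → Q)
    {X : Type u} (τ : Set (X → Q)) (hτ : IsQTop ops τ) (p : X → Q) :
    p ∈ τ ↔ QCont ops τ (sierp ops) p :=
  ⟨qCont_sierp_of_mem ops hτ.2, fun h => h id (id_mem_sierp ops)⟩
end

section
/- Let Q be an Ω-algebra, (X,s) a Q-topological space, and (S,u) the Q-Sierpinski space. Suppose p_i : (X,s) → (S,u) is Q-continuous for each i ∈ n_λ. Then the pointwise image ω_λ^{Q^X}((p_i)_{i∈n_λ}) : (X,s) → (S,u) is also Q-continuous. In particular, the set { p ∈ Q^X | p : (X,s) → (S,u) is Q-continuous } is a subalgebra of Q^X, i.e., a Q-topology on X. -/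
universe u v w x

/-!
A map `f : X → Q` is `Q`-continuous into the `Q`-Sierpinski space exactly when `f ∈ s`: testing
continuity on `id ∈ sierp` gives `f ∈ s`, and conversely `{β | β ∘ f ∈ s}` is a subalgebra of `Q^Q`
containing `id`, hence contains the subalgebra `sierp` generated by `id`. So the continuous maps
form the subalgebra `s` itself.
-/

section

variable {Q : Type u} {I : Type v} {n : I → Type w} (ops : ∀ i, (n i → Q) → Q)

theorem Closed.comp_preimage {X : Type x} {Y : Type*} {τ : Set (X → Q)} (hτ : Closed ops τ)
    (f : X → Y) : Closed ops {β : Y → Q | (fun x => β (f x)) ∈ τ} :=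
  fun i p hp => hτ i (fun j x => p j (f x)) hp

theorem qCont_sierp_iff {X : Type u} {s : Set (X → Q)} (hs : Closed ops s) {f : X → Q} :
    QCont ops s (sierp ops) f ↔ f ∈ s := by
  refine ⟨fun hf => hf id (id_mem_sierp ops), fun hf => ?_⟩
  have hid : id ∈ {β : Q → Q | (fun x => β (f x)) ∈ s} := hf
  exact gen_subset ops (Set.singleton_subset_iff.2 hid) ⟨⟨id, hid⟩, hs.comp_preimage ops f⟩

end

theorem stmt_10 {Q : Type u} {I : Type v} {n : I → Type w} (ops : ∀ i, (n i → Q) → Q)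
    {X : Type u} (s : Set (X → Q)) (hs : IsQTop ops s)
    (lam : I) (p : n lam → X → Q)
    (hp : ∀ i, QCont ops s (sierp ops) (p i)) :
    QCont ops s (sierp ops) (fun x => ops lam (fun i => p i x)) ∧
    IsQTop ops {q : X → Q | QCont ops s (sierp ops) q} := by
  have hcont : {q : X → Q | QCont ops s (sierp ops) q} = s :=
    Set.ext fun _ => qCont_sierp_iff ops hs.2
  have hp_mem : ∀ i, p i ∈ s := fun i => (qCont_sierp_iff ops hs.2).1 (hp i)
  exact ⟨(qCont_sierp_iff ops hs.2).2 (hs.2 lam p hp_mem), by rw [hcont]; exact hs⟩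
end

section
/- Let Q be an Ω-algebra, (X,s) a Q-topological space, and for each i ∈ n_λ let p_i : (X,s) → (S,u) be Q-continuous, where (S,u) is the Q-Sierpinski space. Then the tupling map f : X → S^{n_λ}, f(x)(i) = p_i(x), is Q-continuous from (X,s) to (S^{n_λ}, u_{n_λ}), where u_{n_λ} is the product Q-topology generated by { q ∘ π_i | q ∈ u, i ∈ n_λ } for the projections π_i. -/
/-! The functions on `S^{n_λ}` whose pullback along the tupling map lies in `s` are closed
under the operations, contain each generator `q ∘ π_i` by continuity of `p_i`, and contain
`ops λ` (its pullback is `ops λ` applied to the `p_i`, which lie in `s` since `id ∈ u`),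
so they are nonempty even when `n_λ` is empty.
Hence they form a `Q`-topology containing the generators, so they contain `u_{n_λ}`. -/

universe u v w x

section QTopology

variable {Q : Type u} {I : Type v} {n : I → Type w} (ops : ∀ i, (n i → Q) → Q)

/-- `QCont ops τ η f` says exactly `η ⊆ qcomap f τ`. -/
def qcomap {X Y : Type x} (f : X → Y) (τ : Set (X → Q)) : Set (Y → Q) :=
  {r | (fun x => r (f x)) ∈ τ}

variable {ops}

theorem Closed.qcomap {X Y : Type x} {τ : Set (X → Q)} (hτ : Closed ops τ) (f : X → Y) :
    Closed ops (qcomap f τ) :=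
  fun i r hr => hτ i (fun j x => r j (f x)) hr

theorem QCont.mem_of_sierp {X : Type u} {τ : Set (X → Q)} {g : X → Q}
    (hg : QCont ops τ (sierp ops) g) : g ∈ τ :=
  hg id (id_mem_sierp ops)

theorem qCont_gen_of_subset {X Y : Type x} {τ : Set (X → Q)} {S : Set (Y → Q)} {f : X → Y}
    (hτ : IsQTop ops τ) (hS : S ⊆ qcomap f τ) (hne : (qcomap f τ).Nonempty) :
    QCont ops τ (gen ops S) f :=
  fun _ hα => gen_subset ops hS ⟨hne, hτ.2.qcomap f⟩ hα

end QTopology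

theorem stmt_16 {Q : Type u} {I : Type v} {n : I → Type u} (ops : ∀ i, (n i → Q) → Q)
    {X : Type u} (s : Set (X → Q)) (hs : IsQTop ops s)
    (lam : I) (p : n lam → X → Q)
    (hp : ∀ i, QCont ops s (sierp ops) (p i)) :
    let unl : Set ((n lam → Q) → Q) :=
      gen ops {r | ∃ q ∈ sierp ops, ∃ i : n lam, r = fun a => q (a i)}
    QCont ops s unl (fun x i => p i x) := by
  intro unl
  have hcoord : ∀ i, p i ∈ s := fun i => (hp i).mem_of_sierp
  have hne : (qcomap (fun x i => p i x) s).Nonempty := ⟨ops lam, hs.2 lam p hcoord⟩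
  refine qCont_gen_of_subset hs ?_ hne
  rintro _ ⟨q, hq, i, rfl⟩
  exact hp i q hq
end
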